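/- For the algebra A_2, if the square h = (c, c; r_k^ℓ, r_i^j) (constant left column (c,c) and right column (r_k^ℓ, r_i^j)) belongs to M(1,1), the subalgebra of A_2^4 generated by all squares with constant rows or constant columns, then j = ℓ and |i − k| ∈ {0,1}. -/
import Mathlib


/-- The carrier of the algebra `𝔸₂ = ⟨A₂; t⟩`: `O = {oᵢʲ}`, `R = {rᵢʲ}`, and
`G` the set of formal products, so that `A2.g : A2² → G` is a fixed injection. -/
inductive A2 : Type where
  | o (i j : ℕ) : A2
  | r (i j : ℕ) : A2
  | g (x y : A2) : A2
deriving DecidableEq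

/-- The binary operation `t` of `𝔸₂`:
`t(r₄ᵢʲ, r₄ᵢʲ) = t(r₄ᵢʲ, r₄ᵢ₊₂ʲ) = oᵢʲ`, `t(r₄ᵢ₊₂ʲ, r₄ᵢʲ) = rᵢʲ⁺¹`,
`t(r₄ᵢ₊₂ʲ, r₄ᵢ₊₂ʲ) = rᵢ₊₁ʲ⁺¹`, and otherwise `t(x,y) = s(x,y)` for a fixed
injection `s : A₂² → G`. -/
def t2 : A2 → A2 → A2 :=
  fun x y =>
    match x, y with
    | .r a j, .r b l =>
        if l = j ∧ a % 4 = 0 ∧ (b = a ∨ b = a + 2) then .o (a / 4) j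
        else if l = j ∧ a % 4 = 2 ∧ b + 2 = a then .r (a / 4) (j + 1)
        else if l = j ∧ a % 4 = 2 ∧ b = a then .r (a / 4 + 1) (j + 1)
        else .g x y
    | x, y => .g x y

/-- `M(1,1)`: the subalgebra of `𝔸₂⁴` (coordinatewise `t`) generated by all
squares with constant columns `(x,x;y,y)` or constant rows `(x,y;x,y)`.
A quadruple `(h₁,h₂,h₃,h₄)` represents the square with columns `(h₁,h₂)` and
`(h₃,h₄)` and rows `(h₁,h₃)` and `(h₂,h₄)`. -/
inductive M11 : A2 × A2 × A2 × A2 → Prop where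
  | col (x y : A2) : M11 (x, x, y, y)
  | row (x y : A2) : M11 (x, y, x, y)
  | app (a₁ a₂ a₃ a₄ b₁ b₂ b₃ b₄ : A2) :
      M11 (a₁, a₂, a₃, a₄) → M11 (b₁, b₂, b₃, b₄) →
      M11 (t2 a₁ b₁, t2 a₂ b₂, t2 a₃ b₃, t2 a₄ b₄)

/-- Auxiliary relation: `Sub2 u v p p'` says that the pair `(u,v)` is
"derivable over" the pair `(p,p')`: it is generated from the pair itself and
all constant pairs by coordinatewise application of `t2`. The right column of
a square in `M11` is always derivable over its left column. -/
inductive Sub2 : A2 → A2 → A2 → A2 → Prop where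
  | refl (p p' : A2) : Sub2 p p' p p'
  | diag (x p p' : A2) : Sub2 x x p p'
  | comp (a b c d a' b' c' d' : A2) :
      Sub2 a b a' b' → Sub2 c d c' d' → Sub2 (t2 a c) (t2 b d) (t2 a' c') (t2 b' d')

lemma M11_sub : ∀ z, M11 z → Sub2 z.2.2.1 z.2.2.2 z.1 z.2.1 := by
  intro z h
  induction h with
  | col x y => exact Sub2.diag y x x
  | row x y => exact Sub2.refl x y
  | app a₁ a₂ a₃ a₄ b₁ b₂ b₃ b₄ ha hb iha ihb => exact Sub2.comp _ _ _ _ _ _ _ _ iha ihb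

/-- Full case analysis of one application of `t2`. -/
lemma t2_spec (x y : A2) :
    (∃ a j, a % 4 = 0 ∧ x = A2.r a j ∧ (y = A2.r a j ∨ y = A2.r (a+2) j) ∧
        t2 x y = A2.o (a/4) j) ∨
    (∃ K Q, ((x = A2.r (4*K+2) Q ∧ y = A2.r (4*K) Q) ∨
        (∃ K₁, K = K₁ + 1 ∧ x = A2.r (4*K₁+2) Q ∧ y = A2.r (4*K₁+2) Q)) ∧
        t2 x y = A2.r K (Q+1)) ∨
    t2 x y = A2.g x y := by
  cases x with
  | r a j =>
    cases y with
    | r b m =>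
      by_cases h1 : m = j ∧ a % 4 = 0 ∧ (b = a ∨ b = a + 2)
      · left
        refine ⟨a, j, h1.2.1, rfl, ?_, ?_⟩
        · rcases h1 with ⟨hm, -, h | h⟩ <;> [left; right] <;> rw [hm, h]
        · show t2 _ _ = _
          simp only [t2]
          rw [if_pos h1]
      · by_cases h2 : m = j ∧ a % 4 = 2 ∧ b + 2 = a
        · right; left
          refine ⟨a/4, j, Or.inl ⟨?_, ?_⟩, ?_⟩
          · have h : 4*(a/4)+2 = a := by omega
            rw [h]
          · have h : 4*(a/4) = b := by omega
            rw [h, h2.1]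
          · show t2 _ _ = _
            simp only [t2]
            rw [if_neg h1, if_pos h2]
        · by_cases h3 : m = j ∧ a % 4 = 2 ∧ b = a
          · right; left
            refine ⟨a/4 + 1, j, Or.inr ⟨a/4, rfl, ?_, ?_⟩, ?_⟩
            · have h : 4*(a/4)+2 = a := by omega
              rw [h]
            · have h : 4*(a/4)+2 = b := by omega
              rw [h, h3.1]
            · show t2 _ _ = _
              simp only [t2]
              rw [if_neg h1, if_neg h2, if_pos h3]
          · right; right
            show t2 _ _ = _
            simp only [t2]
            rw [if_neg h1, if_neg h2, if_neg h3]
    | o i j' => right; right; rfl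
    | g u v => right; right; rfl
  | o i j => right; right; rfl
  | g u v => right; right; rfl

/-- Inversion: when does `t2` produce an element of `R`. -/
lemma t2_eq_r' {x y : A2} {k l : ℕ} (h : t2 x y = A2.r k l) :
    ∃ α β jj, l = jj + 1 ∧ x = A2.r α jj ∧ y = A2.r β jj ∧ α % 4 = 2 ∧
      ((β = 4*k ∧ α = 4*k + 2) ∨ (β = α ∧ α + 2 = 4*k)) := by
  rcases t2_spec x y with ⟨a, j, h0, hx, hy, he⟩ | ⟨K, Q, hs, he⟩ | he
  · rw [he] at h; exact absurd h (by simp)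
  · rw [he] at h
    injection h with h1 h2
    subst h1
    rcases hs with ⟨hx, hy⟩ | ⟨K₁, hK, hx, hy⟩
    · exact ⟨4*K+2, 4*K, Q, h2.symm, hx, hy, by omega, Or.inl ⟨rfl, rfl⟩⟩
    · exact ⟨4*K₁+2, 4*K₁+2, Q, h2.symm, hx, hy, by omega, Or.inr ⟨rfl, by omega⟩⟩
  · rw [he] at h; exact absurd h (by simp)

/-- Collision analysis for `t2`: two applications with the same value. -/
lemma t2_eq_t2 {x y x' y' : A2} (h : t2 x y = t2 x' y') :
    x = x' ∨ ∃ K Q,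
      ((x = A2.r (4*K+2) Q ∧ y = A2.r (4*K) Q) ∨
        (∃ K₁, K = K₁+1 ∧ x = A2.r (4*K₁+2) Q ∧ y = A2.r (4*K₁+2) Q)) ∧
      ((x' = A2.r (4*K+2) Q ∧ y' = A2.r (4*K) Q) ∨
        (∃ K₁, K = K₁+1 ∧ x' = A2.r (4*K₁+2) Q ∧ y' = A2.r (4*K₁+2) Q)) := by
  rcases t2_spec x y with ⟨a, j, h0, hx, hy, he⟩ | ⟨K, Q, hs, he⟩ | he <;>
    rcases t2_spec x' y' with ⟨a', j', h0', hx', hy', he'⟩ | ⟨K', Q', hs', he'⟩ | he' <;>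
    rw [he, he'] at h
  · injection h with h1 h2
    left
    have ha : a = a' := by omega
    rw [hx, hx', ha, h2]
  · exact absurd h (by simp)
  · exact absurd h (by simp)
  · exact absurd h (by simp)
  · injection h with h1 h2
    right
    obtain rfl : K = K' := h1
    obtain rfl : Q = Q' := by omega
    exact ⟨K, Q, hs, hs'⟩
  · exact absurd h (by simp)
  · exact absurd h (by simp)
  · exact absurd h (by simp)
  · injection h with h1 h2
    left
    exact h1

lemma div4_le {X Y : ℤ} (h : 4*X ≤ 4*Y) : X ≤ Y := by omega

lemma div4_le' {X Y : ℤ} (h : 4*X ≤ 4*Y + 2) : X ≤ Y := by omega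

/-- If two values are `e`-close to a common short interval, their `t2`-parents
are adjacent. -/
lemma adj_of_bounds {e β β' kk ii mn mx : ℤ} (he : 1 ≤ e)
    (h1 : mn - e ≤ e*β) (h2 : e*β ≤ mx + e) (h3 : mn - e ≤ e*β') (h4 : e*β' ≤ mx + e)
    (h5 : β ≤ 4*kk) (h6 : 4*kk ≤ β + 2) (h7 : β' ≤ 4*ii) (h8 : 4*ii ≤ β' + 2)
    (h9 : mx ≤ mn + 2) : kk - ii ≤ 1 ∧ ii - kk ≤ 1 := by
  have he0 : (0:ℤ) ≤ e := by linarith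
  have m1 : e*(4*kk) ≤ e*(β+2) := mul_le_mul_of_nonneg_left h6 he0
  have m2 : e*β ≤ e*(4*kk) := mul_le_mul_of_nonneg_left h5 he0
  have m3 : e*(4*ii) ≤ e*(β'+2) := mul_le_mul_of_nonneg_left h8 he0
  have m4 : e*β' ≤ e*(4*ii) := mul_le_mul_of_nonneg_left h7 he0
  constructor
  · have hd : 4*(e*kk - e*ii) ≤ 4*e + 2 := by nlinarith
    have hd2 : e*kk - e*ii ≤ e := div4_le' hd
    have hd3 : e*(kk - ii) ≤ e*1 := by nlinarith
    exact le_of_mul_le_mul_left hd3 (by linarith)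
  · have hd : 4*(e*ii - e*kk) ≤ 4*e + 2 := by nlinarith
    have hd2 : e*ii - e*kk ≤ e := div4_le' hd
    have hd3 : e*(ii - kk) ≤ e*1 := by nlinarith
    exact le_of_mul_le_mul_left hd3 (by linarith)

/-- One upward step of the interval bound. -/
lemma bound_step {e β kk mA mB mnb mxb : ℤ} (he : 1 ≤ e)
    (h1 : mnb - e ≤ e*β) (h2 : e*β ≤ mxb + e)
    (h5 : β ≤ 4*kk) (h6 : 4*kk ≤ β + 2)
    (hA : 4*mA - 2 ≤ mnb) (hB : mxb ≤ 4*mB) :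
    mA - e ≤ e*kk ∧ e*kk ≤ mB + e := by
  have he0 : (0:ℤ) ≤ e := by linarith
  have m1 : e*(4*kk) ≤ e*(β+2) := mul_le_mul_of_nonneg_left h6 he0
  have m2 : e*β ≤ e*(4*kk) := mul_le_mul_of_nonneg_left h5 he0
  constructor
  · have h : 4*(mA - e) ≤ 4*(e*kk) := by nlinarith
    exact div4_le h
  · have h : 4*(e*kk) ≤ 4*(mB + e) := by nlinarith
    exact div4_le h

/-- The key invariant: if `(u,v)` is derivable over `(p,p')` where `p,p'` are
equal or same-level elements of `R`, and `u,v` are both in `R`, then `u,v`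
have the same level, and are either adjacent or quantitatively tied to the
interval spanned by `p,p'`. -/
lemma key : ∀ {u v p p' : A2}, Sub2 u v p p' → ∀ (k l i j : ℕ),
    u = A2.r k l → v = A2.r i j →
    (p = p' ∨ ∃ A B q, p = A2.r A q ∧ p' = A2.r B q) →
    l = j ∧ (((k:ℤ) - i ≤ 1 ∧ (i:ℤ) - k ≤ 1) ∨
      (p ≠ p' ∧ ∃ A B q n, p = A2.r A q ∧ p' = A2.r B q ∧ l = q + n ∧
        (min (A:ℤ) (B:ℤ) - 4^n ≤ 4^n * k ∧ (4^n * k : ℤ) ≤ max (A:ℤ) (B:ℤ) + 4^n) ∧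
        (min (A:ℤ) (B:ℤ) - 4^n ≤ 4^n * i ∧ (4^n * i : ℤ) ≤ max (A:ℤ) (B:ℤ) + 4^n))) := by
  intro u v p p' h
  induction h with
  | refl p p' =>
    intro k l i j hu hv hbot
    subst hu; subst hv
    rcases hbot with hpp | ⟨A, B, q, hA, hB⟩
    · injection hpp with h1 h2
      exact ⟨h2, Or.inl (by omega)⟩
    · injection hA with hA1 hA2
      injection hB with hB1 hB2
      by_cases hpe : (A2.r k l) = (A2.r i j)
      · injection hpe with e1 e2
        exact ⟨e2, Or.inl (by omega)⟩
      · refine ⟨by omega, Or.inr ⟨hpe, A, B, q, 0, by rw [hA1, hA2], by rw [hB1, hB2],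
          by omega, ?_, ?_⟩⟩ <;>
        · simp only [pow_zero, one_mul]
          omega
  | diag x p p' =>
    intro k l i j hu hv hbot
    rw [hu] at hv
    injection hv with h1 h2
    exact ⟨h2, Or.inl (by omega)⟩
  | comp a b c d a' b' c' d' h₁ h₂ ih₁ ih₂ =>
    intro k l i j hu hv hbot
    obtain ⟨α, β, jj, hl, ha, hc, hα4, hDa⟩ := t2_eq_r' hu
    obtain ⟨α', β', jj', hj, hb, hd, hα'4, hDb⟩ := t2_eq_r' hv
    -- the case where the bottom pair is an equality (a collision of t2)
    have hcol : t2 a' c' = t2 b' d' →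
        l = j ∧ ((k:ℤ) - i ≤ 1 ∧ (i:ℤ) - k ≤ 1) := by
      intro hpp
      rcases t2_eq_t2 hpp with hab | ⟨K, Q, hs1, hs2⟩
      · -- a' = b' : use the first chain
        obtain ⟨hjj, hdisj⟩ := ih₁ α jj α' jj' ha hb (Or.inl hab)
        refine ⟨by omega, ?_⟩
        rcases hdisj with ⟨e1, e2⟩ | ⟨hne, -⟩
        · rcases hDa with ⟨u1, u2⟩ | ⟨u1, u2⟩ <;> rcases hDb with ⟨w1, w2⟩ | ⟨w1, w2⟩ <;>
            constructor <;> omega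
        · exact absurd hab hne
      · -- r-collision: use the second chain
        obtain ⟨γ, hc', hγ⟩ : ∃ γ, c' = A2.r γ Q ∧ (γ = 4*K ∨ γ + 2 = 4*K) := by
          rcases hs1 with ⟨hx, hy⟩ | ⟨K₁, hK, hx, hy⟩
          · exact ⟨4*K, hy, Or.inl rfl⟩
          · exact ⟨4*K₁+2, hy, Or.inr (by omega)⟩
        obtain ⟨γ', hd', hγ'⟩ : ∃ γ', d' = A2.r γ' Q ∧ (γ' = 4*K ∨ γ' + 2 = 4*K) := by
          rcases hs2 with ⟨hx, hy⟩ | ⟨K₁, hK, hx, hy⟩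
          · exact ⟨4*K, hy, Or.inl rfl⟩
          · exact ⟨4*K₁+2, hy, Or.inr (by omega)⟩
        obtain ⟨hjj, hdisj⟩ := ih₂ β jj β' jj' hc hd (Or.inr ⟨γ, γ', Q, hc', hd'⟩)
        refine ⟨by omega, ?_⟩
        rcases hdisj with ⟨e1, e2⟩ | ⟨hne₂, A₂, B₂, q₂, n₂, hA₂, hB₂, hjn, ⟨bk1, bk2⟩, ⟨bi1, bi2⟩⟩
        · -- adjacency of β, β' forces k = i
          rcases hDa with ⟨u1, u2⟩ | ⟨u1, u2⟩ <;> rcases hDb with ⟨w1, w2⟩ | ⟨w1, w2⟩ <;>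
            constructor <;> omega
        · -- bounds for β, β' relative to a short interval
          rw [hc'] at hA₂
          injection hA₂ with t1 t2x
          rw [hd'] at hB₂
          injection hB₂ with t3 t4
          subst t1; subst t3
          have he : (1:ℤ) ≤ 4 ^ n₂ := one_le_pow₀ (by norm_num)
          have h56 : (β:ℤ) ≤ 4*(k:ℤ) ∧ 4*(k:ℤ) ≤ (β:ℤ) + 2 := by
            rcases hDa with h' | h' <;> omega
          have h78 : (β':ℤ) ≤ 4*(i:ℤ) ∧ 4*(i:ℤ) ≤ (β':ℤ) + 2 := by
            rcases hDb with h' | h' <;> omega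
          have h9 : max (γ:ℤ) (γ':ℤ) ≤ min (γ:ℤ) (γ':ℤ) + 2 := by
            rcases hγ with h' | h' <;> rcases hγ' with h'' | h'' <;> omega
          exact adj_of_bounds he bk1 bk2 bi1 bi2 h56.1 h56.2 h78.1 h78.2 h9
    rcases hbot with hpp | ⟨A, B, q, hp, hp'⟩
    · obtain ⟨h1, h2⟩ := hcol hpp
      exact ⟨h1, Or.inl h2⟩
    · by_cases hpe : t2 a' c' = t2 b' d'
      · obtain ⟨h1, h2⟩ := hcol hpe
        exact ⟨h1, Or.inl h2⟩
      · -- bound route: decompose the bottom pair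
        obtain ⟨α₁, β₁, Q₁, hq1, ha', hc', hα₁4, hD1⟩ := t2_eq_r' hp
        obtain ⟨α₂, β₂, Q₂, hq2, hb', hd', hα₂4, hD2⟩ := t2_eq_r' hp'
        have hQ : Q₂ = Q₁ := by omega
        rw [hQ] at hb' hd'
        obtain ⟨hjj, hdisj⟩ := ih₂ β jj β' jj' hc hd (Or.inr ⟨β₁, β₂, Q₁, hc', hd'⟩)
        refine ⟨by omega, ?_⟩
        rcases hdisj with ⟨e1, e2⟩ | ⟨hne₂, A₂, B₂, q₂, n₂, hA₂, hB₂, hjn, ⟨bk1, bk2⟩, ⟨bi1, bi2⟩⟩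
        · -- β, β' adjacent (hence equal up to parity), so k = i
          refine Or.inl ?_
          rcases hDa with ⟨u1, u2⟩ | ⟨u1, u2⟩ <;> rcases hDb with ⟨w1, w2⟩ | ⟨w1, w2⟩ <;>
            rcases hD1 with ⟨v1, v2⟩ | ⟨v1, v2⟩ <;> rcases hD2 with ⟨z1, z2⟩ | ⟨z1, z2⟩ <;>
            constructor <;> omega
        · rw [hc'] at hA₂
          injection hA₂ with t1 t2x
          rw [hd'] at hB₂
          injection hB₂ with t3 t4
          subst t1; subst t3
          have he : (1:ℤ) ≤ 4 ^ n₂ := one_le_pow₀ (by norm_num)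
          have h56 : (β:ℤ) ≤ 4*(k:ℤ) ∧ 4*(k:ℤ) ≤ (β:ℤ) + 2 := by
            rcases hDa with h' | h' <;> omega
          have h78 : (β':ℤ) ≤ 4*(i:ℤ) ∧ 4*(i:ℤ) ≤ (β':ℤ) + 2 := by
            rcases hDb with h' | h' <;> omega
          have hAmin : 4*(min (A:ℤ) (B:ℤ)) - 2 ≤ min (β₁:ℤ) (β₂:ℤ) := by
            rcases hD1 with ⟨v1, v2⟩ | ⟨v1, v2⟩ <;> rcases hD2 with ⟨z1, z2⟩ | ⟨z1, z2⟩ <;> omega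
          have hBmax : max (β₁:ℤ) (β₂:ℤ) ≤ 4*(max (A:ℤ) (B:ℤ)) := by
            rcases hD1 with ⟨v1, v2⟩ | ⟨v1, v2⟩ <;> rcases hD2 with ⟨z1, z2⟩ | ⟨z1, z2⟩ <;> omega
          obtain ⟨g1, g2⟩ := bound_step he bk1 bk2 h56.1 h56.2 hAmin hBmax
          obtain ⟨g3, g4⟩ := bound_step he bi1 bi2 h78.1 h78.2 hAmin hBmax
          exact Or.inr ⟨hpe, A, B, q, n₂, hp, hp', by omega, ⟨g1, g2⟩, ⟨g3, g4⟩⟩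

theorem stmt5 (c : A2) (i j k l : ℕ)
    (h : M11 (c, c, A2.r k l, A2.r i j)) :
    j = l ∧ |(i : ℤ) - (k : ℤ)| ≤ 1 := by
  have hsub : Sub2 (A2.r k l) (A2.r i j) c c := M11_sub _ h
  obtain ⟨hlj, hd⟩ := key hsub k l i j rfl rfl (Or.inl rfl)
  refine ⟨hlj.symm, ?_⟩
  rcases hd with ⟨h1, h2⟩ | ⟨hne, -⟩
  · rw [abs_le]
    constructor <;> linarith
  · exact absurd rfl hne
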